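/- Under Assumption (Lip), L_p < |𝒳|c_min, and 0 < φ < φ_max, the map Q ↦ B_{μ*_Q} Q maps the ball 𝔅 = {Q : ‖Q‖∞ ≤ ‖f‖∞/(1−γ)} into itself and satisfies, for all Q, Q' ∈ 𝔅, ‖B_{μ*_Q}Q − B_{μ*_{Q'}}Q'‖∞ ≤ k‖Q − Q'‖∞ with k = γ + (L_f + (γ/(1−γ))L_p‖f‖∞)·φ|𝒜|/(|𝒳|c_min − L_p) < 1; consequently it has a unique fixed point Q*φ in 𝔅. -/

import Mathlib

open Finset Filter
open scoped Classical

noncomputable section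

variable {X A : Type*}

/-- A probability vector on a finite set. -/
def IsProb [Fintype X] (μ : X → ℝ) : Prop := (∀ x, 0 ≤ μ x) ∧ ∑ x, μ x = 1

/-- ℓ¹ norm of a signed measure / vector on a finite set. -/
def l1 [Fintype X] (μ : X → ℝ) : ℝ := ∑ x, |μ x|

/-- Sup norm of a Q-table. -/
def supQ [Fintype X] [Fintype A] [Nonempty X] [Nonempty A] (Q : X → A → ℝ) : ℝ :=
  Finset.univ.sup' Finset.univ_nonempty (fun xa : X × A => |Q xa.1 xa.2|)

/-- Minimum of a row of a Q-table (minimum over actions). -/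
def minRow [Fintype A] [Nonempty A] (q : A → ℝ) : ℝ :=
  Finset.univ.inf' Finset.univ_nonempty q

/-- The soft-min distribution over actions with parameter φ. -/
def softmin [Fintype A] (φ : ℝ) (z : A → ℝ) (a : A) : ℝ :=
  Real.exp (-φ * z a) / ∑ a', Real.exp (-φ * z a')

/-- The argmin_e policy: uniform over the minimizers, zero elsewhere. -/
def argminE [Fintype A] [Nonempty A] (q : A → ℝ) (a : A) : ℝ :=
  if q a = minRow q then (1 : ℝ) / (Finset.univ.filter fun a' => q a' = minRow q).card else 0

/-- (P^{π,μ} ν)(x) = ∑_{x'} ν(x') ∑_a π(a|x') p(x|x',a,μ). -/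
def Ppush [Fintype X] [Fintype A] (p : X → A → (X → ℝ) → X → ℝ)
    (π : X → A → ℝ) (μ ν : X → ℝ) (x : X) : ℝ :=
  ∑ x', ν x' * ∑ a, π x' a * p x' a μ x

/-- P₂(Q,μ) = P^{softmin_φ Q, μ} μ − μ. -/
def P2 [Fintype X] [Fintype A] (φ : ℝ) (p : X → A → (X → ℝ) → X → ℝ)
    (Q : X → A → ℝ) (μ : X → ℝ) (x : X) : ℝ :=
  Ppush p (fun x' => softmin φ (Q x')) μ μ x - μ x

/-- The Bellman operator (B_μ Q)(x,a) = f(x,a,μ) + γ ∑_{x'} p(x'|x,a,μ) min_{a'} Q(x',a'). -/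
def bell [Fintype X] [Fintype A] [Nonempty A]
    (f : X → A → (X → ℝ) → ℝ) (p : X → A → (X → ℝ) → X → ℝ) (γ : ℝ)
    (μ : X → ℝ) (Q : X → A → ℝ) (x : X) (a : A) : ℝ :=
  f x a μ + γ * ∑ x', p x a μ x' * minRow (Q x')

/-- T₂(Q,μ) = B_μ Q − Q. -/
def T2 [Fintype X] [Fintype A] [Nonempty A]
    (f : X → A → (X → ℝ) → ℝ) (p : X → A → (X → ℝ) → X → ℝ) (γ : ℝ)
    (Q : X → A → ℝ) (μ : X → ℝ) (x : X) (a : A) : ℝ :=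
  bell f p γ μ Q x a - Q x a

/-!
`Q ↦ B_{μ*_Q} Q` contracts the sup-norm ball of radius `‖f‖∞/(1-γ)` because both of its
ingredients are Lipschitz. `B_μ Q` is `γ`-Lipschitz in `Q` and `(L_f + γ L_p ‖Q‖∞)`-Lipschitz
in `μ`. The equilibrium `μ*_Q` moves in `ℓ¹` by at most
`φ |𝒜| ‖Q - Q'‖∞ / (|𝒳| c_min - L_p)`: writing `μ - μ' = (μ - μ') K + μ' (K - K')`, the
transition matrix `K` has all entries `≥ c_min` and so shrinks the zero-mass vector `μ - μ'` by
`1 - |𝒳| c_min` (Doeblin), while the rows of `K - K'` are controlled by `L_p` and by the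
componentwise `φ`-Lipschitz bound of the softmin. Banach's fixed point theorem on the closed ball
gives the unique fixed point.
-/

section L1
variable {ι κ : Type*} [Fintype ι] [Fintype κ]

open Matrix

lemma IsProb.l1_eq_one {μ : ι → ℝ} (hμ : IsProb μ) : l1 μ = 1 := by
  rw [l1, ← hμ.2]
  exact Finset.sum_congr rfl fun i _ => abs_of_nonneg (hμ.1 i)

lemma l1_nonneg (u : ι → ℝ) : 0 ≤ l1 u :=
  Finset.sum_nonneg fun _ _ => abs_nonneg _

lemma l1_add_le (u v : ι → ℝ) : l1 (u + v) ≤ l1 u + l1 v := by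
  rw [l1, l1, l1, ← Finset.sum_add_distrib]
  exact Finset.sum_le_sum fun i _ => abs_add_le (u i) (v i)

lemma abs_sum_mul_le_l1_mul (d v : ι → ℝ) {M : ℝ} (hv : ∀ i, |v i| ≤ M) :
    |∑ i, d i * v i| ≤ l1 d * M := by
  rw [l1, Finset.sum_mul]
  refine (Finset.abs_sum_le_sum_abs _ _).trans (Finset.sum_le_sum fun i _ => ?_)
  rw [abs_mul]
  exact mul_le_mul_of_nonneg_left (hv i) (abs_nonneg _)

lemma l1_vecMul_le (ν : ι → ℝ) (D : Matrix ι κ ℝ) : l1 (ν ᵥ* D) ≤ ∑ i, |ν i| * l1 (D i) := by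
  calc l1 (ν ᵥ* D) ≤ ∑ j, ∑ i, |ν i| * |D i j| := by
        refine Finset.sum_le_sum fun j _ => (Finset.abs_sum_le_sum_abs _ _).trans_eq ?_
        simp only [abs_mul]
    _ = ∑ i, |ν i| * l1 (D i) := by
        rw [Finset.sum_comm]
        simp only [l1, Finset.mul_sum]

lemma IsProb.l1_vecMul_le_of_forall_le {ν : ι → ℝ} (hν : IsProb ν) {D : Matrix ι κ ℝ} {B : ℝ}
    (hD : ∀ i, l1 (D i) ≤ B) : l1 (ν ᵥ* D) ≤ B := by
  calc l1 (ν ᵥ* D) ≤ ∑ i, ν i * B := by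
        refine (l1_vecMul_le ν D).trans (Finset.sum_le_sum fun i _ => ?_)
        rw [abs_of_nonneg (hν.1 i)]
        exact mul_le_mul_of_nonneg_left (hD i) (hν.1 i)
    _ = B := by rw [← Finset.sum_mul, hν.2, one_mul]

-- Doeblin: subtracting `c` from every entry leaves nonnegative rows of mass `1 - |κ| c`, and a
-- zero-mass vector does not see the shift.
lemma l1_vecMul_le_of_sum_eq_zero {ν : ι → ℝ} (hν : ∑ i, ν i = 0) {K : Matrix ι κ ℝ} {c : ℝ}
    (hKc : ∀ i j, c ≤ K i j) (hK1 : ∀ i, ∑ j, K i j = 1) :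
    l1 (ν ᵥ* K) ≤ (1 - Fintype.card κ * c) * l1 ν := by
  have hshift : ν ᵥ* K = ν ᵥ* of fun i j => K i j - c := by
    ext j
    simp only [vecMul, dotProduct, of_apply, mul_sub, Finset.sum_sub_distrib, ← Finset.sum_mul,
      hν, zero_mul, sub_zero]
  have hrow : ∀ i, l1 ((of fun i j => K i j - c) i) = 1 - Fintype.card κ * c := fun i => by
    simp only [l1, of_apply, abs_of_nonneg (sub_nonneg.mpr (hKc i _)), Finset.sum_sub_distrib,
      hK1 i, Finset.sum_const, Finset.card_univ, nsmul_eq_mul]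
  rw [hshift]
  refine (l1_vecMul_le ν _).trans_eq ?_
  simp_rw [hrow]
  rw [← Finset.sum_mul, mul_comm, l1]

theorem card_mul_l1_sub_le_of_vecMul_eq_self {μ μ' : ι → ℝ} (hμ' : IsProb μ')
    (hsum : ∑ i, μ i = ∑ i, μ' i) {K K' : Matrix ι ι ℝ} (hKμ : μ ᵥ* K = μ) (hK'μ' : μ' ᵥ* K' = μ')
    {c B : ℝ} (hKc : ∀ i j, c ≤ K i j) (hK1 : ∀ i, ∑ j, K i j = 1)
    (hB : ∀ i, l1 (K i - K' i) ≤ B) :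
    Fintype.card ι * c * l1 (μ - μ') ≤ B := by
  have hdecomp : μ - μ' = (μ - μ') ᵥ* K + μ' ᵥ* (K - K') := by
    rw [sub_vecMul, vecMul_sub, hKμ, hK'μ']
    abel
  have hzero : ∑ i, (μ - μ') i = 0 := by simp [Finset.sum_sub_distrib, hsum]
  have := calc l1 (μ - μ') ≤ l1 ((μ - μ') ᵥ* K) + l1 (μ' ᵥ* (K - K')) :=
        (congrArg l1 hdecomp).trans_le (l1_add_le _ _)
    _ ≤ (1 - Fintype.card ι * c) * l1 (μ - μ') + B :=
        add_le_add (l1_vecMul_le_of_sum_eq_zero hzero hKc hK1) (hμ'.l1_vecMul_le_of_forall_le hB)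
  linarith

lemma l1_vecMul_sub_vecMul_le {π π' : κ → ℝ} (hπ : IsProb π) {P P' : Matrix κ ι ℝ}
    (hP' : ∀ a, IsProb (P' a)) {B : ℝ} (hB : ∀ a, l1 (P a - P' a) ≤ B) :
    l1 (π ᵥ* P - π' ᵥ* P') ≤ B + l1 (π - π') := by
  have hdecomp : π ᵥ* P - π' ᵥ* P' = π ᵥ* (P - P') + (π - π') ᵥ* P' := by
    rw [vecMul_sub, sub_vecMul]
    abel
  rw [hdecomp]
  refine (l1_add_le _ _).trans (add_le_add (hπ.l1_vecMul_le_of_forall_le hB) ?_)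
  refine (l1_vecMul_le _ _).trans_eq ?_
  simp_rw [(hP' _).l1_eq_one, mul_one]
  rfl

lemma IsProb.abs_sum_mul_mul_sub_le {σ : ι → ℝ} (hσ : IsProb σ) {δ : ι → ℝ} {M : ℝ}
    (hδ : ∀ b, |δ b| ≤ M) (a : ι) : |∑ b, σ a * σ b * (δ b - δ a)| ≤ M := by
  have hM : 0 ≤ M := (abs_nonneg _).trans (hδ a)
  have hrest : ∑ b ∈ univ.erase a, σ b = 1 - σ a := by
    rw [Finset.sum_erase_eq_sub (mem_univ a), hσ.2]
  calc |∑ b, σ a * σ b * (δ b - δ a)| = |∑ b ∈ univ.erase a, σ a * σ b * (δ b - δ a)| := by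
        rw [Finset.sum_erase _ (by simp)]
    _ ≤ ∑ b ∈ univ.erase a, σ a * σ b * (2 * M) := by
        refine (Finset.abs_sum_le_sum_abs _ _).trans (Finset.sum_le_sum fun b _ => ?_)
        rw [abs_mul, abs_of_nonneg (mul_nonneg (hσ.1 a) (hσ.1 b))]
        refine mul_le_mul_of_nonneg_left ?_ (mul_nonneg (hσ.1 a) (hσ.1 b))
        linarith [abs_sub (δ b) (δ a), hδ a, hδ b]
    _ = 2 * M * (σ a * (1 - σ a)) := by
        rw [← Finset.sum_mul, ← Finset.mul_sum, hrest]
        ring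
    _ ≤ M := by nlinarith [mul_nonneg hM (sq_nonneg (2 * σ a - 1))]

end L1

theorem exists_unique_isFixedPt_of_mapsTo {E : Type*} [MetricSpace E] [CompleteSpace E]
    {s : Set E} (hs : IsClosed s) (hne : s.Nonempty) {F : E → E} (hF : Set.MapsTo F s s)
    {k : NNReal} (hk : k < 1) (hlip : LipschitzOnWith k F s) : ∃! x, x ∈ s ∧ F x = x := by
  obtain ⟨x₀, hx₀⟩ := hne
  obtain ⟨x, hxs, hFx, -⟩ := ContractingWith.exists_fixedPoint' hs.isComplete hF
    ⟨hk, hlip.mapsToRestrict hF⟩ hx₀ (edist_ne_top x₀ (F x₀))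
  refine ⟨x, ⟨hxs, hFx⟩, fun y ⟨hys, hFy⟩ => dist_le_zero.mp ?_⟩
  have h := hlip.dist_le_mul y hys x hxs
  rw [hFy, hFx] at h
  nlinarith [dist_nonneg (x := y) (y := x), (show (k : ℝ) < 1 by exact_mod_cast hk)]

section QTable
variable [Fintype X] [Fintype A] [Nonempty X] [Nonempty A]

lemma abs_le_supQ (Q : X → A → ℝ) (x : X) (a : A) : |Q x a| ≤ supQ Q :=
  Finset.le_sup' (fun xa : X × A => |Q xa.1 xa.2|) (mem_univ (x, a))

lemma supQ_le {Q : X → A → ℝ} {M : ℝ} (h : ∀ x a, |Q x a| ≤ M) : supQ Q ≤ M :=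
  Finset.sup'_le _ _ fun xa _ => h xa.1 xa.2

lemma supQ_nonneg (Q : X → A → ℝ) : 0 ≤ supQ Q :=
  (abs_nonneg _).trans (abs_le_supQ Q (Classical.arbitrary X) (Classical.arbitrary A))

lemma supQ_eq_norm (Q : X → A → ℝ) : supQ Q = ‖Q‖ := by
  refine le_antisymm (supQ_le fun x a => ?_) ?_
  · rw [← Real.norm_eq_abs]
    exact (norm_le_pi_norm (Q x) a).trans (norm_le_pi_norm Q x)
  · refine (pi_norm_le_iff_of_nonneg (supQ_nonneg Q)).mpr fun x => ?_
    refine (pi_norm_le_iff_of_nonneg (supQ_nonneg Q)).mpr fun a => ?_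
    rw [Real.norm_eq_abs]
    exact abs_le_supQ Q x a

lemma continuous_supQ : Continuous (supQ : (X → A → ℝ) → ℝ) :=
  continuous_norm.congr fun Q => (supQ_eq_norm Q).symm

end QTable

section MinRow
variable [Fintype A] [Nonempty A]

lemma abs_minRow_le {q : A → ℝ} {M : ℝ} (h : ∀ a, |q a| ≤ M) : |minRow q| ≤ M := by
  obtain ⟨a, -, ha⟩ := Finset.exists_mem_eq_inf' univ_nonempty q
  rw [minRow, ha]
  exact h a

lemma minRow_le_minRow_add {q q' : A → ℝ} {M : ℝ} (h : ∀ a, q a ≤ q' a + M) :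
    minRow q ≤ minRow q' + M := by
  obtain ⟨a, -, ha⟩ := Finset.exists_mem_eq_inf' univ_nonempty q'
  unfold minRow
  rw [ha]
  exact (Finset.inf'_le q (mem_univ a)).trans (h a)

lemma abs_minRow_sub_minRow_le {q q' : A → ℝ} {M : ℝ} (h : ∀ a, |q a - q' a| ≤ M) :
    |minRow q - minRow q'| ≤ M := by
  rw [abs_sub_le_iff]
  constructor
  · linarith [minRow_le_minRow_add (q := q) (q' := q') (M := M) fun a => by
      linarith [(abs_sub_le_iff.mp (h a)).1]]
  · linarith [minRow_le_minRow_add (q := q') (q' := q) (M := M) fun a => by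
      linarith [(abs_sub_le_iff.mp (h a)).2]]

end MinRow

section Softmin
variable [Fintype A] [Nonempty A]

lemma isProb_softmin (φ : ℝ) (z : A → ℝ) : IsProb (softmin φ z) := by
  have hS : 0 < ∑ a, Real.exp (-φ * z a) :=
    Finset.sum_pos (fun _ _ => Real.exp_pos _) univ_nonempty
  refine ⟨fun a => div_nonneg (Real.exp_pos _).le hS.le, ?_⟩
  simp only [softmin]
  rw [← Finset.sum_div, div_self hS.ne']

lemma hasDerivAt_softmin_line (φ : ℝ) (z δ : A → ℝ) (a : A) (t : ℝ) :
    HasDerivAt (fun t => softmin φ (z + t • δ) a)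
      (φ * ∑ b, softmin φ (z + t • δ) a * softmin φ (z + t • δ) b * (δ b - δ a)) t := by
  set E : A → ℝ := fun b => Real.exp (-φ * (z + t • δ) b)
  have hE : ∀ b, HasDerivAt (fun t => Real.exp (-φ * (z + t • δ) b)) (E b * (-φ * δ b)) t := by
    intro b
    have hlin : HasDerivAt (fun t : ℝ => -φ * (z + t • δ) b) (-φ * δ b) t := by
      simpa using ((hasDerivAt_mul_const (δ b)).const_add (z b)).const_mul (-φ)
    exact hlin.exp
  have hS : ∑ b, E b ≠ 0 := (Finset.sum_pos (fun _ _ => Real.exp_pos _) univ_nonempty).ne'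
  refine ((hE a).div (HasDerivAt.fun_sum fun b _ => hE b) hS).congr_deriv ?_
  set S := ∑ b, E b
  have hterm : ∀ b, E a / S * (E b / S) * (δ b - δ a)
      = E a / S ^ 2 * (E b * δ b) - E a / S ^ 2 * δ a * E b := fun b => by
    field_simp
  have hsum : ∑ b, E b * (-φ * δ b) = -φ * ∑ b, E b * δ b := by
    rw [Finset.mul_sum]
    exact Finset.sum_congr rfl fun b _ => by ring
  show _ = φ * ∑ b, E a / S * (E b / S) * (δ b - δ a)
  simp_rw [hterm]
  rw [Finset.sum_sub_distrib, ← Finset.mul_sum, ← Finset.mul_sum, hsum]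
  field_simp
  simp only [S, E, neg_mul]
  ring

lemma abs_softmin_sub_softmin_le {φ : ℝ} (hφ : 0 ≤ φ) {z z' : A → ℝ} {M : ℝ}
    (h : ∀ b, |z b - z' b| ≤ M) (a : A) : |softmin φ z a - softmin φ z' a| ≤ φ * M := by
  have key := norm_image_sub_le_of_norm_deriv_le_segment_01'
    (f := fun t => softmin φ (z' + t • (z - z')) a)
    (fun t _ => (hasDerivAt_softmin_line φ z' (z - z') a t).hasDerivWithinAt)
    (fun t _ => by
      rw [Real.norm_eq_abs, abs_mul, abs_of_nonneg hφ]
      exact mul_le_mul_of_nonneg_left ((isProb_softmin φ _).abs_sum_mul_mul_sub_le h a) hφ)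
  simpa [Real.norm_eq_abs] using key

lemma l1_softmin_sub_softmin_le {φ : ℝ} (hφ : 0 ≤ φ) {z z' : A → ℝ} {M : ℝ}
    (h : ∀ b, |z b - z' b| ≤ M) :
    l1 (softmin φ z - softmin φ z') ≤ Fintype.card A * (φ * M) := by
  calc l1 (softmin φ z - softmin φ z') ≤ ∑ _a : A, φ * M :=
        Finset.sum_le_sum fun a _ => abs_softmin_sub_softmin_le hφ h a
    _ = Fintype.card A * (φ * M) := by rw [Finset.sum_const, card_univ, nsmul_eq_mul]

end Softmin

section MeanField
variable [Fintype A]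

open Matrix

-- `Ppush p π μ ν = ν ᵥ* mixKernel p π μ` holds by `rfl`; this is how fixed points of `Ppush`
-- enter the matrix lemmas above.
def mixKernel (p : X → A → (X → ℝ) → X → ℝ) (π : X → A → ℝ) (μ : X → ℝ) : Matrix X X ℝ :=
  fun x => π x ᵥ* fun a => p x a μ

lemma le_mixKernel {p : X → A → (X → ℝ) → X → ℝ} {π : X → A → ℝ} {μ : X → ℝ} {c : ℝ}
    (hπ : ∀ x, IsProb (π x)) (hc : ∀ x a y, c ≤ p x a μ y) (x y : X) :
    c ≤ mixKernel p π μ x y := by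
  calc c = ∑ a, π x a * c := by rw [← Finset.sum_mul, (hπ x).2, one_mul]
    _ ≤ ∑ a, π x a * p x a μ y :=
        Finset.sum_le_sum fun a _ => mul_le_mul_of_nonneg_left (hc x a y) ((hπ x).1 a)

variable [Fintype X]

lemma sum_mixKernel {p : X → A → (X → ℝ) → X → ℝ} {π : X → A → ℝ} {μ : X → ℝ}
    (hπ : ∀ x, IsProb (π x)) (hp : ∀ x a, ∑ y, p x a μ y = 1) (x : X) :
    ∑ y, mixKernel p π μ x y = 1 := by
  simp only [mixKernel, vecMul, dotProduct]
  rw [Finset.sum_comm]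
  simp only [← Finset.mul_sum, hp, mul_one, (hπ x).2]

variable [Nonempty X] [Nonempty A]

theorem mul_l1_sub_le_of_Ppush_eq_self {p : X → A → (X → ℝ) → X → ℝ} {cmin Lp φ : ℝ}
    (hp : ∀ x a μ, IsProb μ → IsProb (p x a μ))
    (hcmin : ∀ x a μ y, IsProb μ → cmin ≤ p x a μ y)
    (hLp : ∀ x a μ μ', IsProb μ → IsProb μ' → l1 (p x a μ - p x a μ') ≤ Lp * l1 (μ - μ'))
    (hφ : 0 ≤ φ) {Q Q' : X → A → ℝ} {μ μ' : X → ℝ} (hμ : IsProb μ) (hμ' : IsProb μ')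
    (hfix : Ppush p (fun x => softmin φ (Q x)) μ μ = μ)
    (hfix' : Ppush p (fun x => softmin φ (Q' x)) μ' μ' = μ') :
    (Fintype.card X * cmin - Lp) * l1 (μ - μ') ≤ Fintype.card A * φ * supQ (Q - Q') := by
  have hsoft : ∀ x, l1 (softmin φ (Q x) - softmin φ (Q' x))
      ≤ Fintype.card A * (φ * supQ (Q - Q')) := fun x =>
    l1_softmin_sub_softmin_le hφ fun a => abs_le_supQ (Q - Q') x a
  have h := card_mul_l1_sub_le_of_vecMul_eq_self hμ' (hμ.2.trans hμ'.2.symm) hfix hfix'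
    (le_mixKernel (fun x => isProb_softmin φ (Q x)) fun x a y => hcmin x a μ y hμ)
    (sum_mixKernel (fun x => isProb_softmin φ (Q x)) fun x a => (hp x a μ hμ).2)
    (B := Lp * l1 (μ - μ') + Fintype.card A * (φ * supQ (Q - Q'))) fun x =>
      (l1_vecMul_sub_vecMul_le (isProb_softmin φ (Q x)) (fun a => hp x a μ' hμ')
        fun a => hLp x a μ μ' hμ hμ').trans (add_le_add le_rfl (hsoft x))
  linarith

end MeanField

section Bellman
variable [Fintype X] [Fintype A] [Nonempty X] [Nonempty A]
  {f : X → A → (X → ℝ) → ℝ} {p : X → A → (X → ℝ) → X → ℝ} {γ : ℝ}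

lemma supQ_bell_le {μ : X → ℝ} {fnorm : ℝ} (hp : ∀ x a, IsProb (p x a μ))
    (hf : ∀ x a, |f x a μ| ≤ fnorm) (hγ : 0 ≤ γ) (Q : X → A → ℝ) :
    supQ (bell f p γ μ Q) ≤ fnorm + γ * supQ Q := by
  refine supQ_le fun x a => (abs_add_le _ _).trans (add_le_add (hf x a) ?_)
  rw [abs_mul, abs_of_nonneg hγ]
  refine mul_le_mul_of_nonneg_left ?_ hγ
  calc |∑ y, p x a μ y * minRow (Q y)| ≤ l1 (p x a μ) * supQ Q :=
        abs_sum_mul_le_l1_mul _ _ fun y => abs_minRow_le (abs_le_supQ Q y)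
    _ = supQ Q := by rw [(hp x a).l1_eq_one, one_mul]

lemma supQ_bell_sub_bell_le {μ μ' : X → ℝ} {Lf Lp : ℝ} (hp : ∀ x a, IsProb (p x a μ))
    (hf : ∀ x a, |f x a μ - f x a μ'| ≤ Lf * l1 (μ - μ'))
    (hpL : ∀ x a, l1 (p x a μ - p x a μ') ≤ Lp * l1 (μ - μ')) (hγ : 0 ≤ γ)
    (Q Q' : X → A → ℝ) :
    supQ (bell f p γ μ Q - bell f p γ μ' Q')
      ≤ γ * supQ (Q - Q') + (Lf + γ * Lp * supQ Q') * l1 (μ - μ') := by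
  refine supQ_le fun x a => ?_
  have hsplit : bell f p γ μ Q x a - bell f p γ μ' Q' x a = (f x a μ - f x a μ')
      + γ * (∑ y, p x a μ y * (minRow (Q y) - minRow (Q' y))
        + ∑ y, (p x a μ - p x a μ') y * minRow (Q' y)) := by
    simp only [bell, Pi.sub_apply, mul_sub, sub_mul, Finset.sum_sub_distrib]
    ring
  have hmin : |∑ y, p x a μ y * (minRow (Q y) - minRow (Q' y))| ≤ supQ (Q - Q') := by
    refine (abs_sum_mul_le_l1_mul _ _ fun y => ?_).trans_eq (by rw [(hp x a).l1_eq_one, one_mul])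
    exact abs_minRow_sub_minRow_le fun b => abs_le_supQ (Q - Q') y b
  have hker : |∑ y, (p x a μ - p x a μ') y * minRow (Q' y)| ≤ Lp * l1 (μ - μ') * supQ Q' :=
    (abs_sum_mul_le_l1_mul _ _ fun y => abs_minRow_le (abs_le_supQ Q' y)).trans
      (mul_le_mul_of_nonneg_right (hpL x a) (supQ_nonneg Q'))
  calc |bell f p γ μ Q x a - bell f p γ μ' Q' x a|
      ≤ |f x a μ - f x a μ'| + γ * (|∑ y, p x a μ y * (minRow (Q y) - minRow (Q' y))|
        + |∑ y, (p x a μ - p x a μ') y * minRow (Q' y)|) := by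
        rw [hsplit]
        refine (abs_add_le _ _).trans (add_le_add le_rfl ?_)
        rw [abs_mul, abs_of_nonneg hγ]
        exact mul_le_mul_of_nonneg_left (abs_add_le _ _) hγ
    _ ≤ Lf * l1 (μ - μ') + γ * (supQ (Q - Q') + Lp * l1 (μ - μ') * supQ Q') := by
        gcongr
        exact hf x a
    _ = γ * supQ (Q - Q') + (Lf + γ * Lp * supQ Q') * l1 (μ - μ') := by ring

theorem supQ_bell_sub_bell_le_of_Ppush_eq_self {cmin Lf Lp φ R : ℝ}
    (hp : ∀ x a μ, IsProb μ → IsProb (p x a μ))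
    (hcmin : ∀ x a μ y, IsProb μ → cmin ≤ p x a μ y)
    (hLf : ∀ x a μ μ', IsProb μ → IsProb μ' → |f x a μ - f x a μ'| ≤ Lf * l1 (μ - μ'))
    (hLp : ∀ x a μ μ', IsProb μ → IsProb μ' → l1 (p x a μ - p x a μ') ≤ Lp * l1 (μ - μ'))
    (hγ : 0 ≤ γ) (hφ : 0 ≤ φ) (hLp0 : 0 ≤ Lp) (hc : 0 < Fintype.card X * cmin - Lp)
    (hD : 0 ≤ Lf + γ * Lp * R) {Q Q' : X → A → ℝ} (hQ' : supQ Q' ≤ R) {μ μ' : X → ℝ}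
    (hμ : IsProb μ) (hμ' : IsProb μ')
    (hfix : Ppush p (fun x => softmin φ (Q x)) μ μ = μ)
    (hfix' : Ppush p (fun x => softmin φ (Q' x)) μ' μ' = μ') :
    supQ (bell f p γ μ Q - bell f p γ μ' Q') ≤ (γ + (Lf + γ * Lp * R) * φ * Fintype.card A
      / (Fintype.card X * cmin - Lp)) * supQ (Q - Q') := by
  have hL : l1 (μ - μ') ≤ Fintype.card A * φ * supQ (Q - Q') / (Fintype.card X * cmin - Lp) :=
    (le_div_iff₀' hc).mpr (mul_l1_sub_le_of_Ppush_eq_self hp hcmin hLp hφ hμ hμ' hfix hfix')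
  have hcoef : Lf + γ * Lp * supQ Q' ≤ Lf + γ * Lp * R := by gcongr
  calc _ ≤ γ * supQ (Q - Q') + (Lf + γ * Lp * supQ Q') * l1 (μ - μ') :=
        supQ_bell_sub_bell_le (fun x a => hp x a μ hμ) (fun x a => hLf x a μ μ' hμ hμ')
          (fun x a => hLp x a μ μ' hμ hμ') hγ Q Q'
    _ ≤ γ * supQ (Q - Q') + (Lf + γ * Lp * R)
          * (Fintype.card A * φ * supQ (Q - Q') / (Fintype.card X * cmin - Lp)) :=
        add_le_add le_rfl (mul_le_mul hcoef hL (l1_nonneg _) hD)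
    _ = _ := by ring

end Bellman

theorem existsUnique_supQ_le_and_eq_of_contraction [Fintype X] [Fintype A] [Nonempty X]
    [Nonempty A] {F : (X → A → ℝ) → X → A → ℝ} {R k : ℝ} (hR : 0 ≤ R)
    (hF : ∀ Q, supQ Q ≤ R → supQ (F Q) ≤ R) (hk0 : 0 ≤ k) (hk1 : k < 1)
    (hFk : ∀ Q Q', supQ Q ≤ R → supQ Q' ≤ R → supQ (F Q - F Q') ≤ k * supQ (Q - Q')) :
    ∃! Q, supQ Q ≤ R ∧ F Q = Q := by
  refine exists_unique_isFixedPt_of_mapsTo (s := {Q | supQ Q ≤ R})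
    (isClosed_le continuous_supQ continuous_const) ⟨0, by simpa [supQ_eq_norm] using hR⟩ hF
    (k := ⟨k, hk0⟩) hk1 (LipschitzOnWith.of_dist_le_mul fun Q hQ Q' hQ' => ?_)
  rw [dist_eq_norm, dist_eq_norm, ← supQ_eq_norm, ← supQ_eq_norm]
  exact hFk Q Q' hQ hQ'

lemma pos_and_add_lt_one_of_lt_mul {γ c D φ n : ℝ} (hγ : γ < 1) (hc : 0 < c) (hn : 0 < n)
    (hφ : 0 < φ) (hφmax : φ < c / n * ((1 - γ) / D)) : 0 < D ∧ γ + D * φ * n / c < 1 := by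
  have hD : 0 < D := by
    by_contra! hD
    have : c / n * ((1 - γ) / D) ≤ 0 := mul_nonpos_of_nonneg_of_nonpos (by positivity)
      (div_nonpos_of_nonneg_of_nonpos (by linarith) hD)
    linarith
  refine ⟨hD, ?_⟩
  have : D * φ * n < (1 - γ) * c := by
    calc D * φ * n < D * (c / n * ((1 - γ) / D)) * n := by gcongr
      _ = (1 - γ) * c := by field_simp
  rw [← lt_sub_iff_add_lt', div_lt_iff₀ hc]
  linarith

theorem mfc_Q_fixed_point_general [Fintype X] [Fintype A] [Nonempty X] [Nonempty A]
    (γ : ℝ) (hγ0 : 0 < γ) (hγ1 : γ < 1)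
    (f : X → A → (X → ℝ) → ℝ) (fnorm : ℝ)
    (hf : ∀ x a μ, IsProb μ → |f x a μ| ≤ fnorm)
    (p : X → A → (X → ℝ) → X → ℝ)
    (hp0 : ∀ x a μ x', IsProb μ → 0 ≤ p x a μ x')
    (hp1 : ∀ x a μ, IsProb μ → ∑ x', p x a μ x' = 1)
    (cmin Lf Lp : ℝ)
    (hcmin : ∀ x a μ x', IsProb μ → cmin ≤ p x a μ x')
    (hLp0 : 0 ≤ Lp)
    (hLf : ∀ x a μ μ', IsProb μ → IsProb μ' →
      |f x a μ - f x a μ'| ≤ Lf * l1 (fun y => μ y - μ' y))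
    (hLp : ∀ x a μ μ', IsProb μ → IsProb μ' →
      ∑ x', |p x a μ x' - p x a μ' x'| ≤ Lp * l1 (fun y => μ y - μ' y))
    (hLpc : Lp < (Fintype.card X : ℝ) * cmin)
    (φ : ℝ) (hφ0 : 0 < φ)
    (hφmax : φ < ((Fintype.card X : ℝ) * cmin - Lp) / (Fintype.card A : ℝ)
        * ((1 - γ) / (Lf + (γ / (1 - γ)) * Lp * fnorm)))
    -- μ*_Q : the unique fixed point of μ ↦ P^{softmin_φ Q, μ} μ
    (mustar : (X → A → ℝ) → X → ℝ)
    (hmustar : ∀ Q : X → A → ℝ, IsProb (mustar Q) ∧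
      Ppush p (fun x' => softmin φ (Q x')) (mustar Q) (mustar Q) = mustar Q)
    -- the contraction constant
    (k : ℝ)
    (hkdef : k = γ + (Lf + (γ / (1 - γ)) * Lp * fnorm) * φ * (Fintype.card A : ℝ)
        / ((Fintype.card X : ℝ) * cmin - Lp)) :
    (∀ Q : X → A → ℝ, supQ Q ≤ fnorm / (1 - γ) →
        supQ (bell f p γ (mustar Q) Q) ≤ fnorm / (1 - γ))
    ∧ (∀ Q Q' : X → A → ℝ, supQ Q ≤ fnorm / (1 - γ) → supQ Q' ≤ fnorm / (1 - γ) →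
        supQ (fun x a => bell f p γ (mustar Q) Q x a - bell f p γ (mustar Q') Q' x a)
          ≤ k * supQ (fun x a => Q x a - Q' x a))
    ∧ k < 1
    ∧ (∃! Qs : X → A → ℝ, supQ Qs ≤ fnorm / (1 - γ) ∧
        bell f p γ (mustar Qs) Qs = Qs) := by
  have hprob : ∀ x a μ, IsProb μ → IsProb (p x a μ) := fun x a μ hμ =>
    ⟨fun y => hp0 x a μ y hμ, hp1 x a μ hμ⟩
  have hc : 0 < (Fintype.card X : ℝ) * cmin - Lp := sub_pos.mpr hLpc
  obtain ⟨hD, hk1⟩ := pos_and_add_lt_one_of_lt_mul hγ1 hc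
    (Nat.cast_pos.mpr Fintype.card_pos) hφ0 hφmax
  rw [← hkdef] at hk1
  have hfnorm : 0 ≤ fnorm := (abs_nonneg _).trans
    (hf (Classical.arbitrary X) (Classical.arbitrary A) _ (hmustar 0).1)
  set R := fnorm / (1 - γ) with hR
  have hRfix : fnorm + γ * R = R := by
    rw [hR]
    field_simp [(sub_pos.mpr hγ1).ne']
    ring
  have hDR : Lf + γ / (1 - γ) * Lp * fnorm = Lf + γ * Lp * R := by rw [hR]; ring
  rw [hDR] at hkdef hD
  have hself : ∀ Q, supQ Q ≤ R → supQ (bell f p γ (mustar Q) Q) ≤ R := fun Q hQ =>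
    (supQ_bell_le (fun x a => hprob x a _ (hmustar Q).1) (fun x a => hf x a _ (hmustar Q).1)
      hγ0.le Q).trans (by nlinarith)
  have hcontr : ∀ Q Q', supQ Q ≤ R → supQ Q' ≤ R →
      supQ (bell f p γ (mustar Q) Q - bell f p γ (mustar Q') Q') ≤ k * supQ (Q - Q') :=
    fun Q Q' _ hQ' => hkdef ▸ supQ_bell_sub_bell_le_of_Ppush_eq_self hprob hcmin hLf hLp hγ0.le
      hφ0.le hLp0 hc hD.le hQ' (hmustar Q).1 (hmustar Q').1 (hmustar Q).2 (hmustar Q').2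
  exact ⟨hself, hcontr, hk1, existsUnique_supQ_le_and_eq_of_contraction (div_nonneg hfnorm
    (sub_pos.mpr hγ1).le) hself (by rw [hkdef]; positivity) hk1 hcontr⟩

/-- the map Q ↦ B_{μ*_Q} Q maps the ball ‖Q‖∞ ≤ ‖f‖∞/(1−γ) into itself and is
a strict contraction there with constant
k = γ + (L_f + (γ/(1−γ))L_p‖f‖∞)·φ|𝒜|/(|𝒳|c_min − L_p) < 1; hence it has a unique fixed
point Q*φ in the ball. -/
theorem mfc_Q_fixed_point [Fintype X] [Fintype A] [Nonempty X] [Nonempty A]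
    (γ : ℝ) (hγ0 : 0 < γ) (hγ1 : γ < 1)
    (f : X → A → (X → ℝ) → ℝ) (fnorm : ℝ)
    (hf : ∀ x a μ, IsProb μ → |f x a μ| ≤ fnorm)
    (p : X → A → (X → ℝ) → X → ℝ)
    (hp0 : ∀ x a μ x', IsProb μ → 0 ≤ p x a μ x')
    (hp1 : ∀ x a μ, IsProb μ → ∑ x', p x a μ x' = 1)
    (cmin Lf Lp : ℝ) (hcmin0 : 0 ≤ cmin)
    (hcmin : ∀ x a μ x', IsProb μ → cmin ≤ p x a μ x')
    (hLf0 : 0 ≤ Lf) (hLp0 : 0 ≤ Lp)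
    (hLf : ∀ x a μ μ', IsProb μ → IsProb μ' →
      |f x a μ - f x a μ'| ≤ Lf * l1 (fun y => μ y - μ' y))
    (hLp : ∀ x a μ μ', IsProb μ → IsProb μ' →
      ∑ x', |p x a μ x' - p x a μ' x'| ≤ Lp * l1 (fun y => μ y - μ' y))
    (hLpc : Lp < (Fintype.card X : ℝ) * cmin)
    (φ : ℝ) (hφ0 : 0 < φ)
    (hφmax : φ < ((Fintype.card X : ℝ) * cmin - Lp) / (Fintype.card A : ℝ)
        * ((1 - γ) / (Lf + (γ / (1 - γ)) * Lp * fnorm)))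
    -- μ*_Q : the unique fixed point of μ ↦ P^{softmin_φ Q, μ} μ
    (mustar : (X → A → ℝ) → X → ℝ)
    (hmustar : ∀ Q : X → A → ℝ, IsProb (mustar Q) ∧
      Ppush p (fun x' => softmin φ (Q x')) (mustar Q) (mustar Q) = mustar Q)
    -- the contraction constant
    (k : ℝ)
    (hkdef : k = γ + (Lf + (γ / (1 - γ)) * Lp * fnorm) * φ * (Fintype.card A : ℝ)
        / ((Fintype.card X : ℝ) * cmin - Lp)) :
    (∀ Q : X → A → ℝ, supQ Q ≤ fnorm / (1 - γ) →
        supQ (bell f p γ (mustar Q) Q) ≤ fnorm / (1 - γ))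
    ∧ (∀ Q Q' : X → A → ℝ, supQ Q ≤ fnorm / (1 - γ) → supQ Q' ≤ fnorm / (1 - γ) →
        supQ (fun x a => bell f p γ (mustar Q) Q x a - bell f p γ (mustar Q') Q' x a)
          ≤ k * supQ (fun x a => Q x a - Q' x a))
    ∧ k < 1
    ∧ (∃! Qs : X → A → ℝ, supQ Qs ≤ fnorm / (1 - γ) ∧
        bell f p γ (mustar Qs) Qs = Qs) :=
  mfc_Q_fixed_point_general γ hγ0 hγ1 f fnorm hf p hp0 hp1 cmin Lf Lp hcmin hLp0 hLf hLp hLpc φ hφ0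
    hφmax mustar hmustar k hkdef
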